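/- Assume P is μ-strongly convex with μ > 0 and ν > 0, R > 0. Let (x^k)_{k≥0} in ℝ^d and reals h_{ij}^k with |h_{ij}^k| ≤ γ satisfy: for every k and every i, j, h_{ij}^k is a convex combination of h_{ij}(x^0), …, h_{ij}(x^k); and x^{k+1} = x^k − (H^k + λ I)^{-1} ∇P(x^k), where β^k = max_{i,j} (h_{ij}(x^k) + 2γ)/(h_{ij}^k + 2γ) and H^k = (1/(nm)) Σ_{i,j} [ β^k (h_{ij}^k + 2γ) − 2γ ] a_{ij} a_{ij}ᵀ. If ‖x^0 − x*‖² ≤ μ²/(432 m n ν² R⁶), then ‖x^k − x*‖² ≤ μ²/(432 m n ν² R⁶) for all k ≥ 0. -/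

import Mathlib

open MeasureTheory Filter
open scoped BigOperators

noncomputable section

abbrev Euc (d : ℕ) := EuclideanSpace ℝ (Fin d)

/-- Real inner product on Euclidean space. -/
def rinner {d : ℕ} (a x : Euc d) : ℝ := inner ℝ a x

/-- The rank-one matrix `a aᵀ`. -/
def outerMat {d : ℕ} (a : Euc d) : Matrix (Fin d) (Fin d) ℝ := fun p q => a p * a q

/-- `(1/(nm)) ∑_{ij} c_{ij} a_{ij} a_{ij}ᵀ`. -/
def Hmat {n m d : ℕ} (a : Fin n → Fin m → Euc d) (c : Fin n → Fin m → ℝ) :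
    Matrix (Fin d) (Fin d) ℝ :=
  ((n : ℝ) * m)⁻¹ • ∑ i, ∑ j, c i j • outerMat (a i j)

/-- Matrix-vector multiplication as a map on Euclidean space. -/
def mulVecE {d : ℕ} (M : Matrix (Fin d) (Fin d) ℝ) (v : Euc d) : Euc d := WithLp.toLp 2 (M.mulVec v)

/-- The vector `h_i(y) = (φ''_{i1}(⟨a_{i1},y⟩), …, φ''_{im}(⟨a_{im},y⟩)) ∈ ℝ^m`. -/
def hvecOf {n m d : ℕ} (a : Fin n → Fin m → Euc d) (φ'' : Fin n → Fin m → ℝ → ℝ)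
    (i : Fin n) (y : Euc d) : Euc m :=
  WithLp.toLp 2 (fun j => φ'' i j (rinner (a i j) y))

/-- Componentwise positive part on ℝ^m. -/
def posPartE {m : ℕ} (v : Euc m) : Euc m := WithLp.toLp 2 (fun j => max (v j) 0)

/-!
Each NL2 iterate is an inexact Newton step `x⁺ = x - M⁻¹ ∇P(x)` with `M = H(w) + λI`, where
`w_{ij} = β(h̃_{ij} + 2γ) - 2γ`. The choice of `β` as a maximum makes `w_{ij} ≥ h_{ij}(x)`, so
`M ⪰ ∇²P(x) ⪰ μI`. While all previous iterates lie in the ball of radius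
`ε = √(μ² / (432 m n ν² R⁶))` around `x*`, each `h̃_{ij}` is a convex combination of values of
the `νR`-Lipschitz map `y ↦ h_{ij}(y)` on that ball, hence within `2νRε` of `h_{ij}(x)`; then
`β ≤ 1 + 2νRε/γ` and `w_{ij} ≤ h_{ij}(x) + 8νRε`. Writing
`M(x⁺ - x*) = M(x - x*) - (∇P(x) - ∇P(x*))` and expanding `φ'_{ij}` to second order gives
`μ‖x⁺ - x*‖ ≤ 9νR³ε‖x - x*‖ ≤ μ‖x - x*‖`: the distance to `x*` never increases.
-/

section Hmat

variable {n m d : ℕ} (a : Fin n → Fin m → Euc d)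

lemma outerMat_posSemidef (v : Euc d) : (outerMat v).PosSemidef :=
  Matrix.posSemidef_vecMulVec_self_star (WithLp.ofLp v)

lemma Hmat_posSemidef {c : Fin n → Fin m → ℝ} (hc : ∀ i j, 0 ≤ c i j) :
    (Hmat a c).PosSemidef :=
  (Matrix.posSemidef_sum _ fun i _ => Matrix.posSemidef_sum _ fun j _ =>
    (outerMat_posSemidef (a i j)).smul (hc i j)).smul (by positivity)

lemma Hmat_sub (c c' : Fin n → Fin m → ℝ) :
    Hmat a (fun i j => c i j - c' i j) = Hmat a c - Hmat a c' := by
  simp only [Hmat, sub_smul, Finset.sum_sub_distrib, smul_sub]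

lemma mulVecE_Hmat (c : Fin n → Fin m → ℝ) (v : Euc d) :
    mulVecE (Hmat a c) v = ((n : ℝ) * m)⁻¹ • ∑ i, ∑ j, (c i j * rinner (a i j) v) • a i j := by
  ext p
  simp only [mulVecE, Hmat, Matrix.mulVec, dotProduct, Matrix.smul_apply, Matrix.sum_apply,
    outerMat, smul_eq_mul, Finset.mul_sum, Finset.sum_mul, rinner, PiLp.inner_apply,
    RCLike.inner_apply, Real.ringHom_apply, PiLp.smul_apply, WithLp.ofLp_sum, WithLp.ofLp_smul,
    Finset.sum_apply, Pi.smul_apply]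
  rw [Finset.sum_comm]
  refine Finset.sum_congr rfl fun i _ => ?_
  rw [Finset.sum_comm]
  exact Finset.sum_congr rfl fun j _ => Finset.sum_congr rfl fun q _ => by ring

end Hmat

section mulVecE

variable {d : ℕ}

lemma mulVecE_eq_toLpLin (M : Matrix (Fin d) (Fin d) ℝ) : mulVecE M = Matrix.toLpLin 2 2 M := rfl

lemma mulVecE_add_smul_one (M : Matrix (Fin d) (Fin d) ℝ) (lam : ℝ) (v : Euc d) :
    mulVecE (M + lam • 1) v = mulVecE M v + lam • v := by
  simp [mulVecE_eq_toLpLin]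

lemma mulVecE_mulVecE_inv {M : Matrix (Fin d) (Fin d) ℝ} (hM : IsUnit M) (v : Euc d) :
    mulVecE M (mulVecE M⁻¹ v) = v := by
  simp [mulVecE, Matrix.mulVec_mulVec,
    Matrix.mul_nonsing_inv M ((Matrix.isUnit_iff_isUnit_det M).mp hM)]

lemma inner_mulVecE (M : Matrix (Fin d) (Fin d) ℝ) (u : Euc d) :
    inner ℝ u (mulVecE M u) = dotProduct (WithLp.ofLp u) (M.mulVec (WithLp.ofLp u)) := by
  rw [mulVecE, EuclideanSpace.inner_eq_star_dotProduct, dotProduct_comm]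
  rfl

variable {M : Matrix (Fin d) (Fin d) ℝ} {μ : ℝ}

lemma isUnit_of_posSemidef_sub_smul_one (hM : (M - μ • 1).PosSemidef) (hμ : 0 < μ) : IsUnit M := by
  simpa using (Matrix.PosDef.posSemidef_add hM (Matrix.PosDef.one.smul hμ)).isUnit

lemma mul_norm_le_norm_mulVecE (hM : (M - μ • 1).PosSemidef) (u : Euc d) :
    μ * ‖u‖ ≤ ‖mulVecE M u‖ := by
  have hquad : μ * ‖u‖ ^ 2 ≤ inner ℝ u (mulVecE M u) := by
    have := hM.dotProduct_mulVec_nonneg (WithLp.ofLp u)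
    rw [Matrix.sub_mulVec, dotProduct_sub, Matrix.smul_mulVec, Matrix.one_mulVec, dotProduct_smul,
      star_trivial, ← inner_mulVecE, smul_eq_mul] at this
    rw [← real_inner_self_eq_norm_sq,
      show inner ℝ u u = dotProduct (WithLp.ofLp u) (WithLp.ofLp u) from rfl]
    linarith
  rcases (norm_nonneg u).eq_or_lt with hu | hu
  · simp [← hu]
  · nlinarith [real_inner_le_norm u (mulVecE M u)]

end mulVecE

lemma abs_sub_sub_mul_le_of_lipschitz_deriv {f f' : ℝ → ℝ} {ν : ℝ}
    (hf : ∀ t, HasDerivAt f (f' t) t) (hlip : ∀ s t, |f' s - f' t| ≤ ν * |s - t|) (a b : ℝ) :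
    |f b - f a - f' b * (b - a)| ≤ ν * (b - a) ^ 2 := by
  have hν : 0 ≤ ν := by simpa using (abs_nonneg _).trans (hlip 1 0)
  have hderiv : ∀ t ∈ Set.uIcc a b,
      HasDerivWithinAt (fun s => f s - f' b * s) (f' t - f' b) (Set.uIcc a b) t := fun t _ =>
    ((hf t).sub (by simpa using (hasDerivAt_id t).const_mul (f' b))).hasDerivWithinAt
  have hbound : ∀ t ∈ Set.uIcc a b, ‖f' t - f' b‖ ≤ ν * |b - a| := fun t ht =>
    (hlip t b).trans <| mul_le_mul_of_nonneg_left (by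
      rw [abs_sub_comm t b]; exact Set.abs_sub_right_of_mem_uIcc ht) hν
  have := (convex_uIcc a b).norm_image_sub_le_of_norm_hasDerivWithin_le hderiv hbound
    Set.left_mem_uIcc Set.right_mem_uIcc
  rw [Real.norm_eq_abs, Real.norm_eq_abs, mul_assoc, ← abs_mul, ← sq, abs_sq] at this
  convert this using 2
  ring

lemma abs_sum_mul_sub_le_of_sum_eq_one {ι : Type*} {s : Finset ι} {ρ g : ι → ℝ} {y δ : ℝ}
    (hρ : ∀ t ∈ s, 0 ≤ ρ t) (hsum : ∑ t ∈ s, ρ t = 1) (hg : ∀ t ∈ s, |g t - y| ≤ δ) :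
    |∑ t ∈ s, ρ t * g t - y| ≤ δ := by
  simpa [Real.dist_eq] using
    (convex_closedBall y δ).sum_mem hρ hsum fun t ht => Metric.mem_closedBall.mpr (hg t ht)

lemma norm_inv_mul_smul_sum_sum_le {n m : ℕ} {E : Type*} [SeminormedAddCommGroup E]
    [NormedSpace ℝ E] {v : Fin n → Fin m → E} {C : ℝ} (hv : ∀ i j, ‖v i j‖ ≤ C) (hC : 0 ≤ C) :
    ‖((n : ℝ) * m)⁻¹ • ∑ i, ∑ j, v i j‖ ≤ C := by
  have hsum : ‖∑ i, ∑ j, v i j‖ ≤ n * m * C := calc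
    ‖∑ i, ∑ j, v i j‖ ≤ ∑ i, ∑ j, ‖v i j‖ :=
      (norm_sum_le _ _).trans (Finset.sum_le_sum fun i _ => norm_sum_le _ _)
    _ ≤ ∑ _i : Fin n, ∑ _j : Fin m, C :=
      Finset.sum_le_sum fun i _ => Finset.sum_le_sum fun j _ => hv i j
    _ = n * m * C := by simp [mul_assoc]
  rw [norm_smul, norm_inv, Real.norm_of_nonneg (by positivity)]
  rcases eq_or_ne ((n : ℝ) * m) 0 with h | h
  · simpa [h] using hC
  · rw [inv_mul_le_iff₀ (lt_of_le_of_ne (by positivity) h.symm)]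
    exact hsum

lemma abs_rinner_sub_rinner_le {d : ℕ} {a : Euc d} {R : ℝ} (ha : ‖a‖ ≤ R) (y z : Euc d) :
    |rinner a y - rinner a z| ≤ R * ‖y - z‖ := by
  rw [rinner, rinner, ← inner_sub_right]
  exact (abs_real_inner_le_norm _ _).trans (mul_le_mul_of_nonneg_right ha (norm_nonneg _))

lemma nl2Weight_bounds {ι : Type*} {h c : ι → ℝ} {γ δ B : ℝ} (hγ : 0 < γ)
    (hc : ∀ i, |c i| ≤ γ) (hch : ∀ i, |c i - h i| ≤ δ)
    (hB : ∀ i, (h i + 2 * γ) / (c i + 2 * γ) ≤ B)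
    (hBmem : ∃ i, B = (h i + 2 * γ) / (c i + 2 * γ)) (i : ι) :
    h i ≤ B * (c i + 2 * γ) - 2 * γ ∧ B * (c i + 2 * γ) - 2 * γ ≤ h i + 4 * δ := by
  have hc' : ∀ i, γ ≤ c i + 2 * γ ∧ c i + 2 * γ ≤ 3 * γ := fun i => by
    constructor <;> linarith [abs_le.mp (hc i)]
  have hpos : ∀ i, 0 < c i + 2 * γ := fun i => hγ.trans_le (hc' i).1
  obtain ⟨p, hp⟩ := hBmem
  have hδ : 0 ≤ δ := (abs_nonneg _).trans (hch p)
  have hBp : (B - 1) * (c p + 2 * γ) ≤ δ := by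
    rw [hp, sub_mul, div_mul_cancel₀ _ (hpos p).ne']
    linarith [neg_abs_le (c p - h p), hch p]
  have hB1 : γ * (B - 1) ≤ δ := by
    rcases le_total 0 (B - 1) with hs | hs
    · nlinarith [(hc' p).1]
    · nlinarith
  refine ⟨by linarith [(div_le_iff₀ (hpos i)).mp (hB i)], ?_⟩
  have : (B - 1) * (c i + 2 * γ) ≤ 3 * δ := by
    rcases le_total 0 (B - 1) with hs | hs
    · nlinarith [(hc' i).2]
    · nlinarith [hpos i]
  linarith [le_abs_self (c i - h i), hch i]

section GLM

variable {n m d : ℕ} (a : Fin n → Fin m → Euc d) (φ : Fin n → Fin m → ℝ → ℝ) (lam : ℝ)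

def glmObjective (y : Euc d) : ℝ :=
  ((n : ℝ) * m)⁻¹ * (∑ i, ∑ j, φ i j (rinner (a i j) y)) + lam / 2 * ‖y‖ ^ 2

variable {φ}

lemma hasGradientAt_glmObjective (hφ : ∀ i j, Differentiable ℝ (φ i j)) (y : Euc d) :
    HasGradientAt (glmObjective a φ lam)
      (((n : ℝ) * m)⁻¹ • ∑ i, ∑ j, deriv (φ i j) (rinner (a i j) y) • a i j + lam • y) y := by
  have hterm : ∀ i j, HasFDerivAt (fun z => φ i j (rinner (a i j) z))
      (deriv (φ i j) (rinner (a i j) y) • innerSL ℝ (a i j)) y := fun i j =>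
    (hφ i j _).hasDerivAt.comp_hasFDerivAt y (innerSL ℝ (a i j)).hasFDerivAt
  have hsum := HasFDerivAt.fun_sum (u := Finset.univ) fun i _ =>
    HasFDerivAt.fun_sum (u := Finset.univ) fun j _ => hterm i j
  rw [hasGradientAt_iff_hasFDerivAt]
  refine ((hsum.const_mul ((n : ℝ) * m)⁻¹).add
    ((hasStrictFDerivAt_norm_sq y).hasFDerivAt.const_mul (lam / 2))).congr_fderiv ?_
  ext v
  simp only [rinner, real_inner_comm, add_apply, smul_apply, sum_apply, innerSL_apply_apply,
    smul_eq_mul, nsmul_eq_mul, Nat.cast_ofNat, map_add, map_smul, map_sum,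
    InnerProductSpace.toDual_apply_apply]
  ring

variable {a lam}

lemma mul_norm_newtonStep_sub_le {ν R μ δ : ℝ} {x xstar : Euc d} {w : Fin n → Fin m → ℝ}
    (hsmooth : ∀ i j, ContDiff ℝ 2 (φ i j))
    (hlip : ∀ i j s t, |deriv (deriv (φ i j)) s - deriv (deriv (φ i j)) t| ≤ ν * |s - t|)
    (hν : 0 ≤ ν) (ha : ∀ i j, ‖a i j‖ ≤ R) (hR : 0 ≤ R) (hδ : 0 ≤ δ)
    (hmin : IsLocalMin (glmObjective a φ lam) xstar) (hμ : 0 < μ)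
    (hsc : (Hmat a (fun i j => deriv (deriv (φ i j)) (rinner (a i j) x)) + lam • 1 -
      μ • 1).PosSemidef)
    (hw : ∀ i j, deriv (deriv (φ i j)) (rinner (a i j) x) ≤ w i j ∧
      w i j ≤ deriv (deriv (φ i j)) (rinner (a i j) x) + δ) :
    μ * ‖x - mulVecE (Hmat a w + lam • 1)⁻¹ (gradient (glmObjective a φ lam) x) - xstar‖ ≤
      R * (δ * R * ‖x - xstar‖ + ν * (R * ‖x - xstar‖) ^ 2) := by
  set M := Hmat a w + lam • 1 with hMdef
  set r := ‖x - xstar‖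
  have hgrad := hasGradientAt_glmObjective a lam fun i j => (hsmooth i j).differentiable two_ne_zero
  have hcrit : ((n : ℝ) * m)⁻¹ • ∑ i, ∑ j, deriv (φ i j) (rinner (a i j) xstar) • a i j +
      lam • xstar = 0 :=
    (InnerProductSpace.toDual ℝ _).map_eq_zero_iff.mp
      (hmin.hasFDerivAt_eq_zero (hgrad xstar).hasFDerivAt)
  have hM : (M - μ • 1).PosSemidef := by
    have hsplit : M - μ • 1 = Hmat a (fun i j => w i j - deriv (deriv (φ i j)) (rinner (a i j) x)) +
        (Hmat a (fun i j => deriv (deriv (φ i j)) (rinner (a i j) x)) + lam • 1 - μ • 1) := by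
      rw [Hmat_sub, hMdef]; abel
    rw [hsplit]
    exact (Hmat_posSemidef a fun i j => sub_nonneg.mpr (hw i j).1).add hsc
  set coef : Fin n → Fin m → ℝ := fun i j =>
    w i j * (rinner (a i j) x - rinner (a i j) xstar) -
      (deriv (φ i j) (rinner (a i j) x) - deriv (φ i j) (rinner (a i j) xstar))
  have hres : mulVecE M (x - mulVecE M⁻¹ (gradient (glmObjective a φ lam) x) - xstar) =
      ((n : ℝ) * m)⁻¹ • ∑ i, ∑ j, coef i j • a i j := by
    -- adding `∇P(x*) = 0` makes the `λ`-terms cancel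
    rw [sub_right_comm, mulVecE_eq_toLpLin, map_sub, ← mulVecE_eq_toLpLin,
      mulVecE_mulVecE_inv (isUnit_of_posSemidef_sub_smul_one hM hμ), (hgrad x).gradient,
      mulVecE_add_smul_one, mulVecE_Hmat, ← add_zero (_ - _), ← hcrit]
    simp only [coef, rinner, inner_sub_right, sub_smul, Finset.sum_sub_distrib, smul_sub]
    abel
  have hcoef : ∀ i j, ‖coef i j • a i j‖ ≤ R * (δ * R * r + ν * (R * r) ^ 2) := by
    intro i j
    have hΔ : |rinner (a i j) x - rinner (a i j) xstar| ≤ R * r :=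
      abs_rinner_sub_rinner_le (ha i j) x xstar
    have hΔsq : (rinner (a i j) x - rinner (a i j) xstar) ^ 2 ≤ (R * r) ^ 2 := by
      simpa only [sq_abs] using pow_le_pow_left₀ (abs_nonneg _) hΔ 2
    have htaylor := abs_sub_sub_mul_le_of_lipschitz_deriv
      (fun t => ((hsmooth i j).differentiable_deriv_two t).hasDerivAt) (hlip i j)
      (rinner (a i j) xstar) (rinner (a i j) x)
    have hsplit : coef i j =
        (w i j - deriv (deriv (φ i j)) (rinner (a i j) x)) *
          (rinner (a i j) x - rinner (a i j) xstar) -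
        (deriv (φ i j) (rinner (a i j) x) - deriv (φ i j) (rinner (a i j) xstar) -
          deriv (deriv (φ i j)) (rinner (a i j) x) *
            (rinner (a i j) x - rinner (a i j) xstar)) := by
      simp only [coef]; ring
    have hweight : |(w i j - deriv (deriv (φ i j)) (rinner (a i j) x)) *
        (rinner (a i j) x - rinner (a i j) xstar)| ≤ δ * (R * r) := by
      rw [abs_mul, abs_of_nonneg (sub_nonneg.mpr (hw i j).1)]
      exact mul_le_mul (by linarith [(hw i j).2]) hΔ (abs_nonneg _) hδ
    rw [norm_smul, Real.norm_eq_abs, mul_comm R]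
    refine mul_le_mul ?_ (ha i j) (norm_nonneg _) (by positivity)
    rw [hsplit]
    refine (abs_sub _ _).trans ?_
    linarith [mul_le_mul_of_nonneg_left hΔsq hν]
  calc μ * ‖x - mulVecE M⁻¹ (gradient (glmObjective a φ lam) x) - xstar‖
      ≤ ‖mulVecE M (x - mulVecE M⁻¹ (gradient (glmObjective a φ lam) x) - xstar)‖ :=
        mul_norm_le_norm_mulVecE hM _
    _ ≤ R * (δ * R * r + ν * (R * r) ^ 2) := by
        rw [hres]
        exact norm_inv_mul_smul_sum_sum_le hcoef (by positivity)

lemma norm_nl2Step_sub_le {ν γ R μ ε B : ℝ} {xstar : Euc d} {x : ℕ → Euc d} {k : ℕ}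
    {c : Fin n → Fin m → ℝ}
    (hsmooth : ∀ i j, ContDiff ℝ 2 (φ i j))
    (hlip : ∀ i j s t, |deriv (deriv (φ i j)) s - deriv (deriv (φ i j)) t| ≤ ν * |s - t|)
    (hν : 0 ≤ ν) (hγ : 0 < γ) (ha : ∀ i j, ‖a i j‖ ≤ R) (hR : 0 ≤ R)
    (hmin : IsLocalMin (glmObjective a φ lam) xstar) (hμ : 0 < μ)
    (hsc : (Hmat a (fun i j => deriv (deriv (φ i j)) (rinner (a i j) (x k))) + lam • 1 -
      μ • 1).PosSemidef)
    (hcγ : ∀ i j, |c i j| ≤ γ)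
    (hcc : ∀ i j, ∃ ρ : ℕ → ℝ, (∀ t, t ≤ k → 0 ≤ ρ t) ∧ (∑ t ∈ Finset.range (k + 1), ρ t) = 1 ∧
      c i j = ∑ t ∈ Finset.range (k + 1), ρ t * deriv (deriv (φ i j)) (rinner (a i j) (x t)))
    (hBub : ∀ i j, (deriv (deriv (φ i j)) (rinner (a i j) (x k)) + 2 * γ) / (c i j + 2 * γ) ≤ B)
    (hBmem : ∃ i j, B = (deriv (deriv (φ i j)) (rinner (a i j) (x k)) + 2 * γ) / (c i j + 2 * γ))
    (hprev : ∀ t ≤ k, ‖x t - xstar‖ ≤ ε) (hε : 9 * ν * R ^ 3 * ε ≤ μ) :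
    ‖x k - mulVecE (Hmat a (fun i j => B * (c i j + 2 * γ) - 2 * γ) + lam • 1)⁻¹
      (gradient (glmObjective a φ lam) (x k)) - xstar‖ ≤ ‖x k - xstar‖ := by
  have hε0 : 0 ≤ ε := (norm_nonneg _).trans (hprev k le_rfl)
  have hch : ∀ i j, |c i j - deriv (deriv (φ i j)) (rinner (a i j) (x k))| ≤ 2 * ν * R * ε := by
    intro i j
    obtain ⟨ρ, hρ0, hρ1, hρc⟩ := hcc i j
    rw [hρc]
    refine abs_sum_mul_sub_le_of_sum_eq_one (fun t ht => hρ0 t (Finset.mem_range_succ_iff.mp ht))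
      hρ1 fun t ht => ?_
    have hxt : ‖x t - x k‖ ≤ 2 * ε := calc
      ‖x t - x k‖ ≤ ‖x t - xstar‖ + ‖x k - xstar‖ := by
        simpa only [dist_eq_norm] using dist_triangle_right (x t) (x k) xstar
      _ ≤ 2 * ε := by linarith [hprev t (Finset.mem_range_succ_iff.mp ht), hprev k le_rfl]
    calc _ ≤ ν * |rinner (a i j) (x t) - rinner (a i j) (x k)| := hlip i j _ _
      _ ≤ ν * (R * (2 * ε)) := mul_le_mul_of_nonneg_left
          ((abs_rinner_sub_rinner_le (ha i j) _ _).trans (mul_le_mul_of_nonneg_left hxt hR)) hν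
      _ = 2 * ν * R * ε := by ring
  have hw := nl2Weight_bounds (ι := Fin n × Fin m) (h := fun p => deriv (deriv (φ p.1 p.2))
      (rinner (a p.1 p.2) (x k))) (c := fun p => c p.1 p.2) hγ (fun p => hcγ p.1 p.2)
    (fun p => hch p.1 p.2) (fun p => hBub p.1 p.2)
    (by obtain ⟨i, j, h⟩ := hBmem; exact ⟨(i, j), h⟩)
  have hnewton := mul_norm_newtonStep_sub_le hsmooth hlip hν ha hR (by positivity) hmin hμ hsc
    fun i j => hw (i, j)
  set r := ‖x k - xstar‖
  have hr : r ≤ ε := hprev k le_rfl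
  refine le_of_mul_le_mul_left (hnewton.trans ?_) hμ
  calc R * (4 * (2 * ν * R * ε) * R * r + ν * (R * r) ^ 2)
      = ν * R ^ 3 * r * (8 * ε + r) := by ring
    _ ≤ ν * R ^ 3 * r * (9 * ε) := by gcongr; linarith
    _ = 9 * ν * R ^ 3 * ε * r := by ring
    _ ≤ μ * r := by gcongr

end GLM

lemma nine_mul_sqrt_le {ν R μ : ℝ} {n m : ℕ} (hn : 0 < n) (hm : 0 < m) (hν : 0 < ν) (hR : 0 < R)
    (hμ : 0 < μ) : 9 * ν * R ^ 3 * √(μ ^ 2 / (432 * (m : ℝ) * n * ν ^ 2 * R ^ 6)) ≤ μ := by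
  have hmn : (1 : ℝ) ≤ m * n := by norm_cast; exact Nat.one_le_iff_ne_zero.mpr (by positivity)
  rw [← Real.sqrt_sq (by positivity : 0 ≤ 9 * ν * R ^ 3), ← Real.sqrt_mul (by positivity)]
  refine (Real.sqrt_le_sqrt ?_).trans_eq (Real.sqrt_sq hμ.le)
  rw [mul_div_assoc', div_le_iff₀ (by positivity)]
  nlinarith [mul_pos (mul_pos (pow_pos hν 2) (pow_pos hR 6)) (pow_pos hμ 2)]

theorem nl2_iterates_stay_in_neighborhood_general
    {n m d : ℕ} (hn : 0 < n) (hm : 0 < m)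
    (ν γ lam R μ : ℝ) (hν : 0 < ν) (hγ : 0 < γ) (hR : 0 < R) (hμ : 0 < μ)
    (a : Fin n → Fin m → Euc d) (φ : Fin n → Fin m → ℝ → ℝ)
    (φ'' : Fin n → Fin m → ℝ → ℝ) (hφ'' : ∀ i j, φ'' i j = deriv (deriv (φ i j)))
    (hsmooth : ∀ i j, ContDiff ℝ 2 (φ i j))
    (hlip : ∀ i j s t, |φ'' i j s - φ'' i j t| ≤ ν * |s - t|)
    (hRub : ∀ i j, ‖a i j‖ ≤ R)
    (P : Euc d → ℝ)
    (hP : ∀ y, P y = ((n : ℝ) * m)⁻¹ * (∑ i, ∑ j, φ i j (rinner (a i j) y))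
        + lam / 2 * ‖y‖ ^ 2)
    (hsc : ∀ y : Euc d,
        (Hmat a (fun i j => φ'' i j (rinner (a i j) y)) +
          lam • (1 : Matrix (Fin d) (Fin d) ℝ) -
          μ • (1 : Matrix (Fin d) (Fin d) ℝ)).PosSemidef)
    (xstar : Euc d) (hmin : ∀ y, P xstar ≤ P y)
    (x : ℕ → Euc d) (c : Fin n → Fin m → ℕ → ℝ)
    (hcγ : ∀ i j k, |c i j k| ≤ γ)
    (hcc : ∀ k i j, ∃ ρ : ℕ → ℝ, (∀ t, t ≤ k → 0 ≤ ρ t) ∧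
        (∑ t ∈ Finset.range (k + 1), ρ t) = 1 ∧
        c i j k = ∑ t ∈ Finset.range (k + 1), ρ t * φ'' i j (rinner (a i j) (x t)))
    (B : ℕ → ℝ)
    (hBub : ∀ k i j,
        (φ'' i j (rinner (a i j) (x k)) + 2 * γ) / (c i j k + 2 * γ) ≤ B k)
    (hBmem : ∀ k, ∃ i j,
        B k = (φ'' i j (rinner (a i j) (x k)) + 2 * γ) / (c i j k + 2 * γ))
    (hstep : ∀ k, x (k + 1) = x k - mulVecE
        (Hmat a (fun i j => B k * (c i j k + 2 * γ) - 2 * γ) +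
          lam • (1 : Matrix (Fin d) (Fin d) ℝ))⁻¹ (gradient P (x k)))
    (h0 : ‖x 0 - xstar‖ ^ 2 ≤ μ ^ 2 / (432 * (m : ℝ) * n * ν ^ 2 * R ^ 6)) :
    ∀ k, ‖x k - xstar‖ ^ 2 ≤ μ ^ 2 / (432 * (m : ℝ) * n * ν ^ 2 * R ^ 6) := by
  obtain rfl : φ'' = fun i j => deriv (deriv (φ i j)) := funext fun i => funext (hφ'' i)
  obtain rfl : P = glmObjective a φ lam := funext hP
  set ε := √(μ ^ 2 / (432 * (m : ℝ) * n * ν ^ 2 * R ^ 6))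
  have hball : ∀ k, ∀ t ≤ k, ‖x t - xstar‖ ≤ ε := by
    intro k
    induction k with
    | zero =>
      intro t ht
      rw [Nat.le_zero.mp ht]
      exact Real.le_sqrt_of_sq_le h0
    | succ k ih =>
      intro t ht
      rcases Nat.le_succ_iff.mp ht with ht | rfl
      · exact ih t ht
      · rw [hstep k]
        exact (norm_nl2Step_sub_le hsmooth hlip hν.le hγ hRub hR.le (.of_forall hmin) hμ
          (hsc (x k)) (hcγ · · k) (hcc k) (hBub k) (hBmem k) ih
          (nine_mul_sqrt_le hn hm hν hR hμ)).trans (ih k le_rfl)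
  exact fun k => (Real.le_sqrt (norm_nonneg _) (by positivity)).mp (hball k k le_rfl)

/-- iterates of NL2 remain in the local neighborhood (Lemma 2). -/
theorem nl2_iterates_stay_in_neighborhood
    {n m d : ℕ} (hn : 0 < n) (hm : 0 < m) (hd : 0 < d)
    (ν γ lam R μ : ℝ) (hν : 0 < ν) (hγ : 0 < γ) (hlam : 0 ≤ lam) (hR : 0 < R) (hμ : 0 < μ)
    (a : Fin n → Fin m → Euc d) (φ : Fin n → Fin m → ℝ → ℝ)
    (φ'' : Fin n → Fin m → ℝ → ℝ) (hφ'' : ∀ i j, φ'' i j = deriv (deriv (φ i j)))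
    (hsmooth : ∀ i j, ContDiff ℝ 2 (φ i j))
    (hbdd : ∀ i j t, |φ'' i j t| ≤ γ)
    (hlip : ∀ i j s t, |φ'' i j s - φ'' i j t| ≤ ν * |s - t|)
    (hRub : ∀ i j, ‖a i j‖ ≤ R) (hRmem : ∃ i j, R = ‖a i j‖)
    (P : Euc d → ℝ)
    (hP : ∀ y, P y = ((n : ℝ) * m)⁻¹ * (∑ i, ∑ j, φ i j (rinner (a i j) y))
        + lam / 2 * ‖y‖ ^ 2)
    (hsc : ∀ y : Euc d,
        (Hmat a (fun i j => φ'' i j (rinner (a i j) y)) +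
          lam • (1 : Matrix (Fin d) (Fin d) ℝ) -
          μ • (1 : Matrix (Fin d) (Fin d) ℝ)).PosSemidef)
    (xstar : Euc d) (hmin : ∀ y, P xstar ≤ P y)
    (x : ℕ → Euc d) (c : Fin n → Fin m → ℕ → ℝ)
    (hcγ : ∀ i j k, |c i j k| ≤ γ)
    (hcc : ∀ k i j, ∃ ρ : ℕ → ℝ, (∀ t, t ≤ k → 0 ≤ ρ t) ∧
        (∑ t ∈ Finset.range (k + 1), ρ t) = 1 ∧
        c i j k = ∑ t ∈ Finset.range (k + 1), ρ t * φ'' i j (rinner (a i j) (x t)))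
    (B : ℕ → ℝ)
    (hBub : ∀ k i j,
        (φ'' i j (rinner (a i j) (x k)) + 2 * γ) / (c i j k + 2 * γ) ≤ B k)
    (hBmem : ∀ k, ∃ i j,
        B k = (φ'' i j (rinner (a i j) (x k)) + 2 * γ) / (c i j k + 2 * γ))
    (hstep : ∀ k, x (k + 1) = x k - mulVecE
        (Hmat a (fun i j => B k * (c i j k + 2 * γ) - 2 * γ) +
          lam • (1 : Matrix (Fin d) (Fin d) ℝ))⁻¹ (gradient P (x k)))
    (h0 : ‖x 0 - xstar‖ ^ 2 ≤ μ ^ 2 / (432 * (m : ℝ) * n * ν ^ 2 * R ^ 6)) :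
    ∀ k, ‖x k - xstar‖ ^ 2 ≤ μ ^ 2 / (432 * (m : ℝ) * n * ν ^ 2 * R ^ 6) :=
  nl2_iterates_stay_in_neighborhood_general hn hm ν γ lam R μ hν hγ hR hμ a φ φ'' hφ'' hsmooth hlip
    hRub P hP hsc xstar hmin x c hcγ hcc B hBub hBmem hstep h0
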